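/- If a $C^1$ function $K : [0,T] \to \mathbb{R}^{n \times n}$ solves $\dot K_t + K_t M(t) + M(t)^\dagger K_t - K_t N K_t + \mathbb{F} = 0$, $K_T = 0$, with $N = \tfrac12 \mathbb{B}_0 R_0^{-1}\mathbb{B}_0^\dagger \succeq 0$ and $\mathbb{F} \succeq 0$ symmetric, and $M$ continuous, then for every $x \in \mathbb{R}^n$ the function $t \mapsto x^\dagger K_t x$ is nonnegative on $[0,T]$; moreover $\sup_{t \in [0,T]} \|K_t\|$ is bounded by a constant depending only on $T$, $\sup_t\|M(t)\|$ and $\|\mathbb{F}\|$ (a priori bound preventing blow-up). -/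

import Mathlib

open Matrix Set

open Filter Topology

namespace Stmt18Aux

attribute [local instance] Matrix.normedAddCommGroup Matrix.normedSpace

variable {n : ℕ}

/-- derivative of a quadratic form -/
lemma hasDerivAt_quad (x : Fin n → ℝ) {W : ℝ → Matrix (Fin n) (Fin n) ℝ}
    {W' : Matrix (Fin n) (Fin n) ℝ} {t : ℝ}
    (h : ∀ i j, HasDerivAt (fun u => W u i j) (W' i j) t) :
    HasDerivAt (fun u => x ⬝ᵥ (W u) *ᵥ x) (x ⬝ᵥ W' *ᵥ x) t := by
  simp only [dotProduct, mulVec]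
  exact HasDerivAt.fun_sum fun i _ =>
    (HasDerivAt.fun_sum fun j _ => (h i j).mul_const (x j)).const_mul (x i)

/-- scaling a quadratic form upper bound -/
lemma quad_scale {A : Matrix (Fin n) (Fin n) ℝ} {c : ℝ}
    (h : ∀ x : Fin n → ℝ, x ⬝ᵥ x = 1 → x ⬝ᵥ A *ᵥ x ≤ c) :
    ∀ y : Fin n → ℝ, y ⬝ᵥ A *ᵥ y ≤ c * (y ⬝ᵥ y) := by
  intro y
  rcases eq_or_ne y 0 with rfl | hy
  · simp
  · have hyy : 0 < y ⬝ᵥ y := by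
      have h1 : y ⬝ᵥ y = ∑ i, y i ^ 2 := by simp [dotProduct, sq]
      rw [h1]
      apply Finset.sum_pos'
      · intro i _; positivity
      · obtain ⟨i, hi⟩ := Function.ne_iff.1 hy
        refine ⟨i, Finset.mem_univ i, ?_⟩
        have h3 := sq_abs (y i)
        nlinarith [abs_pos.2 hi]
    set r : ℝ := Real.sqrt (y ⬝ᵥ y) with hr
    have hrpos : 0 < r := Real.sqrt_pos.2 hyy
    have hr2 : r ^ 2 = y ⬝ᵥ y := Real.sq_sqrt hyy.le
    have hu : (r⁻¹ • y) ⬝ᵥ (r⁻¹ • y) = 1 := by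
      rw [smul_dotProduct, dotProduct_smul, smul_eq_mul, smul_eq_mul, ← hr2, sq]
      field_simp
    have hle := h (r⁻¹ • y) hu
    rw [smul_dotProduct, mulVec_smul, dotProduct_smul, smul_eq_mul, smul_eq_mul] at hle
    have key : y ⬝ᵥ A *ᵥ y = r ^ 2 * (r⁻¹ * (r⁻¹ * (y ⬝ᵥ A *ᵥ y))) := by
      field_simp
    have h2 : y ⬝ᵥ A *ᵥ y ≤ r ^ 2 * c := by
      rw [key]
      exact mul_le_mul_of_nonneg_left hle (sq_nonneg r)
    rw [hr2] at h2
    linarith [h2]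

/-- scaling: nonnegativity of a quadratic form -/
lemma quad_nonneg {A : Matrix (Fin n) (Fin n) ℝ}
    (h : ∀ x : Fin n → ℝ, x ⬝ᵥ x = 1 → 0 ≤ x ⬝ᵥ A *ᵥ x) :
    ∀ y : Fin n → ℝ, 0 ≤ y ⬝ᵥ A *ᵥ y := by
  intro y
  have h' : ∀ x : Fin n → ℝ, x ⬝ᵥ x = 1 → x ⬝ᵥ (-A) *ᵥ x ≤ 0 := by
    intro x hx
    have := h x hx
    simp only [neg_mulVec, dotProduct_neg]
    linarith
  have := quad_scale h' y
  simp only [neg_mulVec, dotProduct_neg, zero_mul] at this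
  linarith

/-- entries of a unit vector are bounded by 1 -/
lemma unit_entry_le {x : Fin n → ℝ} (hx : x ⬝ᵥ x = 1) (i : Fin n) : |x i| ≤ 1 := by
  have h1 : x ⬝ᵥ x = ∑ j, x j ^ 2 := by simp [dotProduct, sq]
  have h2 : x i ^ 2 ≤ 1 := by
    rw [← hx, h1]
    exact Finset.single_le_sum (f := fun j => x j ^ 2) (fun j _ => by positivity)
      (Finset.mem_univ i)
  nlinarith [abs_nonneg (x i), sq_abs (x i)]

/-- quadratic form bound at unit vectors by the sum of absolute entries -/
lemma quad_abs_le {x : Fin n → ℝ} (hx : x ⬝ᵥ x = 1) (A : Matrix (Fin n) (Fin n) ℝ) :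
    |x ⬝ᵥ A *ᵥ x| ≤ ∑ i, ∑ j, |A i j| := by
  have h1 : x ⬝ᵥ A *ᵥ x = ∑ i, ∑ j, x i * (A i j * x j) := by
    simp [dotProduct, mulVec, Finset.mul_sum]
  rw [h1]
  calc |∑ i, ∑ j, x i * (A i j * x j)| ≤ ∑ i, |∑ j, x i * (A i j * x j)| :=
        Finset.abs_sum_le_sum_abs _ _
    _ ≤ ∑ i, ∑ j, |x i * (A i j * x j)| :=
        Finset.sum_le_sum fun i _ => Finset.abs_sum_le_sum_abs _ _
    _ ≤ ∑ i, ∑ j, |A i j| := by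
        apply Finset.sum_le_sum; intro i _
        apply Finset.sum_le_sum; intro j _
        rw [abs_mul, abs_mul]
        calc |x i| * (|A i j| * |x j|) ≤ 1 * (|A i j| * 1) := by
              apply mul_le_mul (unit_entry_le hx i) ?_ (by positivity) zero_le_one
              exact mul_le_mul_of_nonneg_left (unit_entry_le hx j) (abs_nonneg _)
          _ = |A i j| := by ring

lemma dot_KA {Kt : Matrix (Fin n) (Fin n) ℝ} (hs : Ktᵀ = Kt) {a : ℝ} {x : Fin n → ℝ}
    (hKx : Kt *ᵥ x = a • x) (w : Fin n → ℝ) : x ⬝ᵥ Kt *ᵥ w = a * (x ⬝ᵥ w) := by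
  rw [dotProduct_mulVec, ← mulVec_transpose, hs, hKx, smul_dotProduct, smul_eq_mul]

lemma dot_single (A : Matrix (Fin n) (Fin n) ℝ) (i j : Fin n) :
    Pi.single i (1:ℝ) ⬝ᵥ A *ᵥ Pi.single j 1 = A i j := by
  simp [single_dotProduct, mulVec_single]

/-- Core barrier lemma: strict positivity of the quadratic form propagates backwards from `T`. -/
lemma core {T : ℝ} (hT : 0 ≤ T) {W W' : ℝ → Matrix (Fin n) (Fin n) ℝ}
    (hd : ∀ t ∈ Icc (0:ℝ) T, ∀ i j, HasDerivAt (fun u => W u i j) (W' t i j) t)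
    (hsym : ∀ t ∈ Icc (0:ℝ) T, (W t)ᵀ = W t)
    (hTpos : ∀ x : Fin n → ℝ, x ⬝ᵥ x = 1 → 0 < x ⬝ᵥ (W T) *ᵥ x)
    (hkey : ∀ t ∈ Ico (0:ℝ) T, ∀ x : Fin n → ℝ, x ⬝ᵥ x = 1 → (W t) *ᵥ x = 0 →
      x ⬝ᵥ (W' t) *ᵥ x < 0) :
    ∀ t ∈ Icc (0:ℝ) T, ∀ x : Fin n → ℝ, x ⬝ᵥ x = 1 → 0 < x ⬝ᵥ (W t) *ᵥ x := by
  by_contra hcon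
  push_neg at hcon
  obtain ⟨t₀, ht₀, x₀, hx₀, hq₀⟩ := hcon
  set S : Set (Fin n → ℝ) := {x | x ⬝ᵥ x = 1} with hSdef
  have hSclosed : IsClosed S := by
    have hc : Continuous fun x : Fin n → ℝ => x ⬝ᵥ x := by
      simp only [dotProduct]
      exact continuous_finset_sum _ fun i _ => (continuous_apply i).mul (continuous_apply i)
    exact isClosed_eq hc continuous_const
  have hSsub : S ⊆ Metric.closedBall (0 : Fin n → ℝ) 1 := by
    intro x hx
    rw [Metric.mem_closedBall, dist_zero_right]
    refine (pi_norm_le_iff_of_nonneg zero_le_one).2 fun i => ?_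
    rw [Real.norm_eq_abs]
    exact unit_entry_le hx i
  have hScomp : IsCompact S :=
    (isCompact_closedBall (0 : Fin n → ℝ) 1).of_isClosed_subset hSclosed hSsub
  set g : ℝ × (Fin n → ℝ) → ℝ := fun p => p.2 ⬝ᵥ (W p.1) *ᵥ p.2 with hgdef
  have hgC : ∀ p : ℝ × (Fin n → ℝ), p.1 ∈ Icc (0:ℝ) T → ContinuousAt g p := by
    intro p hp
    have : ContinuousAt (fun q : ℝ × (Fin n → ℝ) =>
        ∑ i, ∑ j, q.2 i * (W q.1 i j * q.2 j)) p := by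
      refine tendsto_finset_sum _ fun i _ => tendsto_finset_sum _ fun j _ => ?_
      have h2i : ContinuousAt (fun q : ℝ × (Fin n → ℝ) => q.2 i) p :=
        ((continuous_apply i).comp continuous_snd).continuousAt
      have h2j : ContinuousAt (fun q : ℝ × (Fin n → ℝ) => q.2 j) p :=
        ((continuous_apply j).comp continuous_snd).continuousAt
      have hw : ContinuousAt (fun q : ℝ × (Fin n → ℝ) => W q.1 i j) p :=
        ((hd p.1 hp i j).continuousAt).comp continuous_fst.continuousAt
      exact h2i.mul (hw.mul h2j)
    convert this using 2 with q
    simp [hgdef, dotProduct, mulVec, Finset.mul_sum]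
  set B : Set (ℝ × (Fin n → ℝ)) :=
    {p | p.1 ∈ Icc (0:ℝ) T ∧ p.2 ∈ S ∧ g p ≤ 0} with hBdef
  have hBsub : B ⊆ (Icc (0:ℝ) T) ×ˢ S := fun p hp => ⟨hp.1, hp.2.1⟩
  have hBclosed : IsClosed B := by
    refine isClosed_of_closure_subset fun p hp => ?_
    have hp1 : p ∈ (Icc (0:ℝ) T) ×ˢ S := by
      have hsub : closure B ⊆ closure ((Icc (0:ℝ) T) ×ˢ S) := closure_mono hBsub
      have hcl : IsClosed ((Icc (0:ℝ) T) ×ˢ S) := isClosed_Icc.prod hSclosed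
      exact hcl.closure_eq ▸ hsub hp
    have hne : (𝓝[B] p).NeBot := mem_closure_iff_nhdsWithin_neBot.1 hp
    have htd : Tendsto g (𝓝[B] p) (𝓝 (g p)) :=
      ((hgC p hp1.1).tendsto).mono_left nhdsWithin_le_nhds
    have hle : g p ≤ 0 := by
      refine le_of_tendsto htd ?_
      filter_upwards [eventually_mem_nhdsWithin] with q hq using hq.2.2
    exact ⟨hp1.1, hp1.2, hle⟩
  have hBcomp : IsCompact B :=
    (isCompact_Icc.prod hScomp).of_isClosed_subset hBclosed hBsub
  set A : Set ℝ := Prod.fst '' B with hAdef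
  have hAcomp : IsCompact A := hBcomp.image continuous_fst
  have hAne : A.Nonempty := ⟨t₀, ⟨(t₀, x₀), ⟨ht₀, hx₀, hq₀⟩, rfl⟩⟩
  set ts : ℝ := sSup A with htsdef
  have htsA : ts ∈ A := hAcomp.sSup_mem hAne
  obtain ⟨⟨t₁, x⟩, hmem, h1⟩ := htsA
  simp only at h1
  rw [h1] at hmem
  obtain ⟨htsIcc', hxS, hqle''⟩ := hmem
  have htsIcc : ts ∈ Icc (0:ℝ) T := htsIcc'
  have hxunit : x ⬝ᵥ x = 1 := hxS
  have hqle : x ⬝ᵥ (W ts) *ᵥ x ≤ 0 := hqle''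
  have htsT : ts < T := by
    rcases lt_or_eq_of_le htsIcc.2 with h | h
    · exact h
    · exfalso; rw [h] at hqle; exact absurd (hTpos x hxunit) (not_lt.2 hqle)
  have hAbdd : BddAbove A := hAcomp.bddAbove
  have hpos : ∀ s ∈ Ioc ts T, ∀ y : Fin n → ℝ, y ⬝ᵥ y = 1 → 0 < y ⬝ᵥ (W s) *ᵥ y := by
    intro s hs y hy
    by_contra hle
    push_neg at hle
    have hsA : s ∈ A := ⟨(s, y), ⟨⟨le_trans htsIcc.1 hs.1.le, hs.2⟩, hy, hle⟩, rfl⟩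
    exact absurd (le_csSup hAbdd hsA) (not_le.2 hs.1)
  have hq0 : ∀ y : Fin n → ℝ, y ⬝ᵥ y = 1 → 0 ≤ y ⬝ᵥ (W ts) *ᵥ y := by
    intro y hy
    have hder := hasDerivAt_quad y (fun i j => hd ts htsIcc i j)
    have htd : Tendsto (fun s => y ⬝ᵥ (W s) *ᵥ y) (𝓝[>] ts) (𝓝 (y ⬝ᵥ (W ts) *ᵥ y)) :=
      hder.continuousAt.tendsto.mono_left nhdsWithin_le_nhds
    refine ge_of_tendsto htd ?_
    filter_upwards [Ioc_mem_nhdsGT htsT] with s hs using (hpos s hs y hy).le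
  have hPSD : (W ts).PosSemidef := by
    refine .of_dotProduct_mulVec_nonneg ?_ ?_
    · show (W ts)ᴴ = W ts
      rw [conjTranspose_eq_transpose_of_trivial]
      exact hsym ts htsIcc
    · intro z
      have := quad_nonneg hq0 z
      simpa using this
  have hqeq : x ⬝ᵥ (W ts) *ᵥ x = 0 := le_antisymm hqle (hq0 x hxunit)
  have hker : (W ts) *ᵥ x = 0 := by
    refine (hPSD.dotProduct_mulVec_zero_iff x).1 ?_
    simpa using hqeq
  have hdneg : x ⬝ᵥ (W' ts) *ᵥ x < 0 := hkey ts ⟨htsIcc.1, htsT⟩ x hxunit hker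
  have hder := hasDerivAt_quad x (fun i j => hd ts htsIcc i j)
  have hslope := hasDerivAt_iff_tendsto_slope.1 hder
  have h2 : Tendsto (slope (fun s => x ⬝ᵥ (W s) *ᵥ x) ts) (𝓝[>] ts)
      (𝓝 (x ⬝ᵥ (W' ts) *ᵥ x)) := by
    refine hslope.mono_left (nhdsWithin_mono _ fun s hs => ?_)
    simp only [mem_compl_iff, mem_singleton_iff]
    exact ne_of_gt hs
  have hge : 0 ≤ x ⬝ᵥ (W' ts) *ᵥ x := by
    refine ge_of_tendsto h2 ?_
    filter_upwards [Ioc_mem_nhdsGT htsT] with s hs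
    rw [slope_def_field]
    apply div_nonneg
    · rw [hqeq, sub_zero]; exact (hpos s hs x hxunit).le
    · linarith [hs.1]
  linarith

lemma entry_le (A : Matrix (Fin n) (Fin n) ℝ) (i j : Fin n) : |A i j| ≤ ‖A‖ := by
  have h1 : ‖A i j‖ ≤ ‖A i‖ := norm_le_pi_norm (A i) j
  have h2 : ‖A i‖ ≤ ‖A‖ := norm_le_pi_norm A i
  calc |A i j| = ‖A i j‖ := (Real.norm_eq_abs _).symm
    _ ≤ ‖A‖ := h1.trans h2

lemma norm_le_of_entries {A : Matrix (Fin n) (Fin n) ℝ} {c : ℝ} (hc : 0 ≤ c)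
    (h : ∀ i j, |A i j| ≤ c) : ‖A‖ ≤ c := by
  refine (pi_norm_le_iff_of_nonneg hc).2 fun i => ?_
  refine (pi_norm_le_iff_of_nonneg hc).2 fun j => ?_
  rw [Real.norm_eq_abs]
  exact h i j

lemma entry_mul_le (A B : Matrix (Fin n) (Fin n) ℝ) (i j : Fin n) :
    |(A * B) i j| ≤ n * ‖A‖ * ‖B‖ := by
  rw [Matrix.mul_apply]
  calc |∑ l, A i l * B l j| ≤ ∑ l, |A i l * B l j| := Finset.abs_sum_le_sum_abs _ _
    _ ≤ ∑ _l : Fin n, ‖A‖ * ‖B‖ := by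
        refine Finset.sum_le_sum fun l _ => ?_
        rw [abs_mul]
        exact mul_le_mul (entry_le A i l) (entry_le B l j) (abs_nonneg _)
          (le_trans (abs_nonneg _) (entry_le A i l))
    _ = n * ‖A‖ * ‖B‖ := by simp [Finset.sum_const, mul_assoc]

lemma norm_mul_le' (A B : Matrix (Fin n) (Fin n) ℝ) : ‖A * B‖ ≤ n * ‖A‖ * ‖B‖ := by
  refine norm_le_of_entries (by positivity) fun i j => entry_mul_le A B i j

lemma norm_transpose_le (A : Matrix (Fin n) (Fin n) ℝ) : ‖Aᵀ‖ ≤ ‖A‖ :=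
  norm_le_of_entries (norm_nonneg A) fun i j => entry_le A j i

/-- Any solution of the Riccati equation with symmetric `N`, `F` and zero terminal
condition is symmetric on `[0, T]`. -/
lemma symm_of_riccati {T : ℝ} (hT : 0 ≤ T) {K K' : ℝ → Matrix (Fin n) (Fin n) ℝ}
    {N F : Matrix (Fin n) (Fin n) ℝ} {M : ℝ → Matrix (Fin n) (Fin n) ℝ}
    (hNsym : Nᵀ = N) (hFsym : Fᵀ = F)
    {Mb : ℝ} (hM : ∀ t ∈ Icc (0:ℝ) T, ∀ i j, |M t i j| ≤ Mb)
    (hd : ∀ t ∈ Icc (0:ℝ) T, ∀ i j, HasDerivAt (fun u => K u i j) (K' t i j) t)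
    (heq : ∀ t ∈ Icc (0:ℝ) T, K' t = K t * N * K t - K t * M t - (M t)ᵀ * K t - F)
    (hKT : K T = 0) :
    ∀ t ∈ Icc (0:ℝ) T, (K t)ᵀ = K t := by
  have hdK : ∀ t ∈ Icc (0:ℝ) T, HasDerivAt K (K' t) t := by
    intro t ht
    exact hasDerivAt_pi.2 fun i => hasDerivAt_pi.2 fun j => hd t ht i j
  have hKc : ContinuousOn K (Icc (0:ℝ) T) := fun t ht =>
    (hdK t ht).continuousAt.continuousWithinAt
  obtain ⟨κ, hκ⟩ := isCompact_Icc.exists_bound_of_continuousOn hKc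
  have hκ0 : 0 ≤ κ := le_trans (norm_nonneg _) (hκ T ⟨hT, le_refl T⟩)
  set c1 : ℝ := n * ‖N‖ * κ + |Mb| with hc1
  set L : ℝ := n * c1 + n * c1 with hL
  have hc1nn : 0 ≤ c1 := by positivity
  set g : ℝ → Matrix (Fin n) (Fin n) ℝ := fun t => (K (T - t))ᵀ - K (T - t) with hg
  set g' : ℝ → Matrix (Fin n) (Fin n) ℝ :=
    fun t => -((K' (T - t))ᵀ - K' (T - t)) with hg'
  have hmem : ∀ t ∈ Icc (0:ℝ) T, T - t ∈ Icc (0:ℝ) T := by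
    intro t ht; exact ⟨by linarith [ht.2], by linarith [ht.1]⟩
  have hgd : ∀ t ∈ Icc (0:ℝ) T, HasDerivAt g (g' t) t := by
    intro t ht
    refine hasDerivAt_pi.2 fun i => hasDerivAt_pi.2 fun j => ?_
    have hlin : HasDerivAt (fun u : ℝ => T - u) (-1) t := by
      simpa using (hasDerivAt_id t).const_sub T
    have hji := ((hd (T - t) (hmem t ht) j i).comp t hlin)
    have hij := ((hd (T - t) (hmem t ht) i j).comp t hlin)
    have : HasDerivAt (fun u => K (T - u) j i - K (T - u) i j)
        (K' (T - t) j i * (-1) - K' (T - t) i j * (-1)) t := hji.sub hij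
    refine this.congr_deriv ?_
    simp [hg']
    ring
  have hgc : ContinuousOn g (Icc (0:ℝ) T) := fun t ht =>
    (hgd t ht).continuousAt.continuousWithinAt
  have hg0 : ‖g 0‖ ≤ 0 := by
    have : g 0 = 0 := by simp [hg, hKT]
    simp [this]
  have hkeyid : ∀ u ∈ Icc (0:ℝ) T, (K' u)ᵀ - K' u =
      ((K u)ᵀ - K u) * (N * K u - M u) + ((K u)ᵀ * N - (M u)ᵀ) * ((K u)ᵀ - K u) := by
    intro u hu
    rw [heq u hu]
    simp only [transpose_sub, transpose_mul, transpose_transpose, hNsym, hFsym]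
    noncomm_ring
  have hbound : ∀ t ∈ Ico (0:ℝ) T, ‖g' t‖ ≤ L * ‖g t‖ + 0 := by
    intro t ht
    have htI : t ∈ Icc (0:ℝ) T := Ico_subset_Icc_self ht
    have huI : T - t ∈ Icc (0:ℝ) T := hmem t htI
    have hS : g t = (K (T - t))ᵀ - K (T - t) := rfl
    have h1 : ‖g' t‖ = ‖(K' (T - t))ᵀ - K' (T - t)‖ := norm_neg _
    rw [h1, hkeyid (T - t) huI, add_zero, ← hS]
    have hb1 : ‖N * K (T - t) - M (T - t)‖ ≤ c1 := by
      calc ‖N * K (T - t) - M (T - t)‖ ≤ ‖N * K (T - t)‖ + ‖M (T - t)‖ := norm_sub_le _ _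
        _ ≤ n * ‖N‖ * κ + |Mb| := by
            gcongr
            · calc ‖N * K (T - t)‖ ≤ n * ‖N‖ * ‖K (T - t)‖ := norm_mul_le' _ _
                _ ≤ n * ‖N‖ * κ := by
                    have := hκ (T - t) huI
                    gcongr
            · refine norm_le_of_entries (abs_nonneg _) fun i j => ?_
              exact (hM (T - t) huI i j).trans (le_abs_self Mb)
    have hb2 : ‖(K (T - t))ᵀ * N - (M (T - t))ᵀ‖ ≤ c1 := by
      calc ‖(K (T - t))ᵀ * N - (M (T - t))ᵀ‖ ≤ ‖(K (T - t))ᵀ * N‖ + ‖(M (T - t))ᵀ‖ :=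
            norm_sub_le _ _
        _ ≤ n * ‖N‖ * κ + |Mb| := by
            gcongr
            · calc ‖(K (T - t))ᵀ * N‖ ≤ n * ‖(K (T - t))ᵀ‖ * ‖N‖ := norm_mul_le' _ _
                _ ≤ n * κ * ‖N‖ := by
                    have h3 := (norm_transpose_le (K (T - t))).trans (hκ (T - t) huI)
                    gcongr
                _ = n * ‖N‖ * κ := by ring
            · refine norm_le_of_entries (abs_nonneg _) fun i j => ?_
              show |M (T - t) j i| ≤ |Mb|
              exact (hM (T - t) huI j i).trans (le_abs_self Mb)
    calc ‖g t * (N * K (T - t) - M (T - t)) +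
          ((K (T - t))ᵀ * N - (M (T - t))ᵀ) * g t‖
        ≤ ‖g t * (N * K (T - t) - M (T - t))‖ +
          ‖((K (T - t))ᵀ * N - (M (T - t))ᵀ) * g t‖ := norm_add_le _ _
      _ ≤ n * ‖g t‖ * c1 + n * c1 * ‖g t‖ := by
          gcongr
          · calc ‖g t * (N * K (T - t) - M (T - t))‖
                ≤ n * ‖g t‖ * ‖N * K (T - t) - M (T - t)‖ := norm_mul_le' _ _
              _ ≤ n * ‖g t‖ * c1 := by gcongr
          · calc ‖((K (T - t))ᵀ * N - (M (T - t))ᵀ) * g t‖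
                ≤ n * ‖(K (T - t))ᵀ * N - (M (T - t))ᵀ‖ * ‖g t‖ := norm_mul_le' _ _
              _ ≤ n * c1 * ‖g t‖ := by gcongr
      _ = L * ‖g t‖ := by ring
  have hgron := norm_le_gronwallBound_of_norm_deriv_right_le hgc
    (fun t ht => (hgd t (Ico_subset_Icc_self ht)).hasDerivWithinAt) hg0 hbound
  have hzero : ∀ t ∈ Icc (0:ℝ) T, g t = 0 := by
    intro t ht
    have := hgron t ht
    rw [gronwallBound_ε0_δ0] at this
    exact norm_le_zero_iff.1 this
  intro s hs
  have hTs : T - s ∈ Icc (0:ℝ) T := hmem s hs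
  have := hzero (T - s) hTs
  have heq2 : T - (T - s) = s := by ring
  rw [hg] at this
  simp only [heq2] at this
  exact sub_eq_zero.1 this

end Stmt18Aux

set_option maxHeartbeats 1600000 in
open Stmt18Aux in
/-- A priori estimates for the closed-loop Riccati equation
`K̇ + KM(t) + M(t)ᵀK - KNK + 𝔽 = 0`, `K_T = 0`, with `N = ½𝔹₀R₀⁻¹𝔹₀ᵀ ⪰ 0` and `𝔽 ⪰ 0`:
any `C¹` solution has a nonnegative quadratic form `xᵀK_tx ≥ 0` on `[0,T]`, and `K` is bounded
on `[0,T]` by a constant depending only on `T`, a bound on `M` and a bound on `𝔽`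
(and the fixed dimensions). -/
theorem stmt_18 (n k : ℕ) :
    ∃ C : ℝ → ℝ → ℝ → ℝ,
      ∀ (T : ℝ), 0 ≤ T →
      ∀ (B0 : Matrix (Fin n) (Fin k) ℝ)
        (R0 : Matrix (Fin k) (Fin k) ℝ), R0.PosDef →
      ∀ (F : Matrix (Fin n) (Fin n) ℝ), F.PosSemidef →
      ∀ (M : ℝ → Matrix (Fin n) (Fin n) ℝ),
        (∀ i j, Continuous fun t => M t i j) →
      ∀ (Mbound Fbound : ℝ),
        (∀ t ∈ Icc (0 : ℝ) T, ∀ i j, |M t i j| ≤ Mbound) →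
        (∀ i j, |F i j| ≤ Fbound) →
      ∀ (K K' : ℝ → Matrix (Fin n) (Fin n) ℝ),
        (∀ t ∈ Icc (0 : ℝ) T, ∀ i j, HasDerivAt (fun u => K u i j) (K' t i j) t) →
        (∀ t ∈ Icc (0 : ℝ) T,
          K' t + K t * M t + (M t)ᵀ * K t
            - K t * ((1 / 2 : ℝ) • (B0 * R0⁻¹ * B0ᵀ)) * K t + F = 0) →
        K T = 0 →
        (∀ t ∈ Icc (0 : ℝ) T, ∀ x : Fin n → ℝ, 0 ≤ x ⬝ᵥ (K t).mulVec x) ∧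
          ∀ t ∈ Icc (0 : ℝ) T, ∀ i j, |K t i j| ≤ C T Mbound Fbound := by
  classical
  refine ⟨fun T Mb Fb => ((n:ℝ)^2 * |Fb|) / (2*(n:ℝ)^2*|Mb| + 1) *
      (Real.exp ((2*(n:ℝ)^2*|Mb| + 1) * |T|) - 1), ?_⟩
  intro T hT B0 R0 hR F hF M hMc Mbound Fbound hMb hFb K K' hKd hEq hKT
  by_cases hn : n = 0
  · constructor
    · intro t ht x
      have hdot : x ⬝ᵥ (K t) *ᵥ x = 0 := by
        apply Finset.sum_eq_zero
        intro i _
        exact absurd i.isLt (by omega)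
      rw [hdot]
    · intro t ht i j
      exact absurd i.isLt (by omega)
  have hn1 : 0 < n := Nat.pos_of_ne_zero hn
  set N : Matrix (Fin n) (Fin n) ℝ := (1 / 2 : ℝ) • (B0 * R0⁻¹ * B0ᵀ) with hNdef
  have hR0sym : R0ᵀ = R0 := by
    rw [← conjTranspose_eq_transpose_of_trivial]; exact hR.1
  have hRinv : (R0⁻¹).PosDef := hR.inv
  have hNsym : Nᵀ = N := by
    simp only [hNdef, transpose_smul, transpose_mul, transpose_transpose,
      transpose_nonsing_inv, hR0sym, Matrix.mul_assoc]
  have hNq : ∀ x : Fin n → ℝ, 0 ≤ x ⬝ᵥ N *ᵥ x := by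
    intro x
    rw [hNdef, smul_mulVec, dotProduct_smul, smul_eq_mul]
    have h2 : B0 *ᵥ (R0⁻¹ *ᵥ (B0ᵀ *ᵥ x)) = (B0 * R0⁻¹ * B0ᵀ) *ᵥ x := by
      rw [mulVec_mulVec, mulVec_mulVec]
    rw [← h2, dotProduct_mulVec, ← mulVec_transpose]
    have h3 := hRinv.posSemidef.dotProduct_mulVec_nonneg (B0ᵀ *ᵥ x)
    simp only [star_trivial] at h3
    have h4 : (0:ℝ) ≤ 1/2 := by norm_num
    exact mul_nonneg h4 h3
  have hFsym : Fᵀ = F := by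
    rw [← conjTranspose_eq_transpose_of_trivial]; exact hF.1
  have hFq : ∀ x : Fin n → ℝ, 0 ≤ x ⬝ᵥ F *ᵥ x := by
    intro x
    have := hF.dotProduct_mulVec_nonneg x
    simpa using this
  have heq' : ∀ t ∈ Icc (0:ℝ) T,
      K' t = K t * N * K t - K t * M t - (M t)ᵀ * K t - F := by
    intro t ht
    have h := hEq t ht
    have h2 : K' t - (K t * N * K t - K t * M t - (M t)ᵀ * K t - F)
        = K' t + K t * M t + (M t)ᵀ * K t - K t * N * K t + F := by abel
    have h3 := h2.trans h
    exact sub_eq_zero.1 h3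
  have hsymK : ∀ t ∈ Icc (0:ℝ) T, (K t)ᵀ = K t :=
    symm_of_riccati hT hNsym hFsym hMb hKd heq' hKT
  have hji : ∀ t ∈ Icc (0:ℝ) T, ∀ i j, K t j i = K t i j := by
    intro t ht i j
    have h := hsymK t ht
    have := congrFun (congrFun h i) j
    rwa [transpose_apply] at this
  -- constants
  have i0 : Fin n := ⟨0, hn1⟩
  have hMb0 : 0 ≤ Mbound := le_trans (abs_nonneg _) (hMb 0 ⟨le_refl 0, hT⟩ i0 i0)
  have hFb0 : 0 ≤ Fbound := le_trans (abs_nonneg _) (hFb i0 i0)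
  set MB : ℝ := (n:ℝ)^2 * Mbound with hMBdef
  set FB : ℝ := (n:ℝ)^2 * Fbound with hFBdef
  set NB : ℝ := ∑ i, ∑ j, |N i j| with hNBdef
  have hMB0 : 0 ≤ MB := by positivity
  have hFB0 : 0 ≤ FB := by positivity
  have hNB0 : 0 ≤ NB :=
    Finset.sum_nonneg fun i _ => Finset.sum_nonneg fun j _ => abs_nonneg _
  set β : ℝ := 2 * MB + 1 with hβdef
  have hβ0 : 0 < β := by positivity
  set ξ : ℝ → ℝ := fun t => Real.exp (β * (T - t)) with hξdef
  set ψ : ℝ → ℝ := fun t => FB / β * (ξ t - 1) with hψdef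
  have hξd : ∀ t : ℝ, HasDerivAt ξ (-β * ξ t) t := by
    intro t
    have h1 : HasDerivAt (fun u : ℝ => β * (T - u)) (β * (-1)) t :=
      (((hasDerivAt_id t).const_sub T)).const_mul β
    have h2 := h1.exp
    convert h2 using 1
    simp only [hξdef]
    ring
  have hψd : ∀ t : ℝ, HasDerivAt ψ (-FB * ξ t) t := by
    intro t
    have h1 := ((hξd t).sub_const 1).const_mul (FB / β)
    refine h1.congr_deriv ?_
    field_simp
  have hξpos : ∀ t : ℝ, 0 < ξ t := fun t => Real.exp_pos _
  have hξ1 : ∀ t ∈ Icc (0:ℝ) T, 1 ≤ ξ t := by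
    intro t ht
    simp only [hξdef]
    apply Real.one_le_exp
    nlinarith [ht.2]
  set Z : ℝ := Real.exp (β * T) with hZdef
  have hZpos : 0 < Z := Real.exp_pos _
  have hξZ : ∀ t ∈ Icc (0:ℝ) T, ξ t ≤ Z := by
    intro t ht
    apply Real.exp_le_exp.2
    nlinarith [ht.1]
  have hψ0 : ∀ t ∈ Icc (0:ℝ) T, 0 ≤ ψ t := by
    intro t ht
    have h1 := hξ1 t ht
    have h2 : 0 ≤ FB / β := by positivity
    simp only [hψdef]
    nlinarith
  have hψT : ψ T = 0 := by simp [hψdef, hξdef]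
  have hξT : ξ T = 1 := by simp [hξdef]
  have hψmono : ∀ t ∈ Icc (0:ℝ) T, ψ t ≤ ψ 0 := by
    intro t ht
    have h1 : ξ t ≤ ξ 0 := by
      simp only [hξdef]
      apply Real.exp_le_exp.2
      nlinarith [ht.1]
    have h2 : 0 ≤ FB / β := by positivity
    simp only [hψdef]
    nlinarith
  -- quadratic form bounds
  have hqM : ∀ t ∈ Icc (0:ℝ) T, ∀ x : Fin n → ℝ, x ⬝ᵥ x = 1 →
      |x ⬝ᵥ (M t) *ᵥ x| ≤ MB := by
    intro t ht x hx
    refine (quad_abs_le hx (M t)).trans ?_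
    calc ∑ i, ∑ j, |M t i j| ≤ ∑ _i : Fin n, ∑ _j : Fin n, Mbound :=
        Finset.sum_le_sum fun i _ => Finset.sum_le_sum fun j _ => hMb t ht i j
      _ = MB := by
          simp only [Finset.sum_const, Finset.card_univ, Fintype.card_fin, nsmul_eq_mul,
            hMBdef]
          ring
  have hqF : ∀ x : Fin n → ℝ, x ⬝ᵥ x = 1 → |x ⬝ᵥ F *ᵥ x| ≤ FB := by
    intro x hx
    refine (quad_abs_le hx F).trans ?_
    calc ∑ i, ∑ j, |F i j| ≤ ∑ _i : Fin n, ∑ _j : Fin n, Fbound :=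
        Finset.sum_le_sum fun i _ => Finset.sum_le_sum fun j _ => hFb i j
      _ = FB := by
          simp only [Finset.sum_const, Finset.card_univ, Fintype.card_fin, nsmul_eq_mul,
            hFBdef]
          ring
  have hqN : ∀ x : Fin n → ℝ, x ⬝ᵥ x = 1 → x ⬝ᵥ N *ᵥ x ≤ NB := fun x hx =>
    (le_abs_self _).trans (quad_abs_le hx N)
  -- expansion helpers
  have hWexpU : ∀ (c : ℝ) (A : Matrix (Fin n) (Fin n) ℝ) (x : Fin n → ℝ),
      x ⬝ᵥ (c • (1 : Matrix (Fin n) (Fin n) ℝ) - A) *ᵥ x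
        = c * (x ⬝ᵥ x) - x ⬝ᵥ A *ᵥ x := by
    intro c A x
    rw [sub_mulVec, dotProduct_sub, smul_mulVec, one_mulVec, dotProduct_smul,
      smul_eq_mul]
  have hWexpL : ∀ (c : ℝ) (A : Matrix (Fin n) (Fin n) ℝ) (x : Fin n → ℝ),
      x ⬝ᵥ (A + c • (1 : Matrix (Fin n) (Fin n) ℝ)) *ᵥ x
        = x ⬝ᵥ A *ᵥ x + c * (x ⬝ᵥ x) := by
    intro c A x
    rw [add_mulVec, dotProduct_add, smul_mulVec, one_mulVec, dotProduct_smul,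
      smul_eq_mul]
  -- upper barrier
  have hupcore : ∀ ε : ℝ, 0 < ε → ∀ t ∈ Icc (0:ℝ) T, ∀ x : Fin n → ℝ, x ⬝ᵥ x = 1 →
      0 < x ⬝ᵥ ((ψ t + ε * ξ t) • (1 : Matrix (Fin n) (Fin n) ℝ) - K t) *ᵥ x := by
    intro ε hε
    refine core (W := fun u => (ψ u + ε * ξ u) • (1 : Matrix (Fin n) (Fin n) ℝ) - K u)
      (W' := fun u => (-FB * ξ u + ε * (-β * ξ u)) • (1 : Matrix (Fin n) (Fin n) ℝ) - K' u)
      hT ?_ ?_ ?_ ?_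
    · intro t ht i j
      have hsc : HasDerivAt (fun u => ψ u + ε * ξ u) (-FB * ξ t + ε * (-β * ξ t)) t :=
        (hψd t).add ((hξd t).const_mul ε)
      exact (hsc.mul_const ((1 : Matrix (Fin n) (Fin n) ℝ) i j)).sub (hKd t ht i j)
    · intro t ht
      rw [transpose_sub, transpose_smul, transpose_one, hsymK t ht]
    · intro x hx
      rw [hWexpU, hx, hKT]
      simp only [hψT, hξT, zero_mulVec, dotProduct_zero]
      nlinarith
    · intro t ht x hx hker
      have htI : t ∈ Icc (0:ℝ) T := Ico_subset_Icc_self ht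
      set a : ℝ := ψ t + ε * ξ t with hadef
      have ha0 : 0 ≤ a := by
        have h1 := hψ0 t htI
        have h2 := (hξpos t).le
        nlinarith
      have hKx : K t *ᵥ x = a • x := by
        have h1 : (a • (1 : Matrix (Fin n) (Fin n) ℝ) - K t) *ᵥ x
            = a • x - K t *ᵥ x := by
          rw [sub_mulVec, smul_mulVec, one_mulVec]
        rw [h1] at hker
        exact (sub_eq_zero.1 hker).symm
      have hKsym := hsymK t htI
      have hKM : x ⬝ᵥ (K t * M t) *ᵥ x = a * (x ⬝ᵥ (M t) *ᵥ x) := by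
        rw [← mulVec_mulVec, dot_KA hKsym hKx]
      have hMK : x ⬝ᵥ ((M t)ᵀ * K t) *ᵥ x = a * (x ⬝ᵥ (M t) *ᵥ x) := by
        rw [← mulVec_mulVec, hKx, mulVec_smul, dotProduct_smul, smul_eq_mul]
        congr 1
        rw [dotProduct_mulVec, vecMul_transpose, dotProduct_comm]
      have hKNK : x ⬝ᵥ (K t * N * K t) *ᵥ x = a * (a * (x ⬝ᵥ N *ᵥ x)) := by
        rw [Matrix.mul_assoc, ← mulVec_mulVec, dot_KA hKsym hKx, ← mulVec_mulVec, hKx,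
          mulVec_smul, dotProduct_smul, smul_eq_mul]
      have hq' : x ⬝ᵥ (K' t) *ᵥ x
          = a * (a * (x ⬝ᵥ N *ᵥ x)) - 2 * (a * (x ⬝ᵥ (M t) *ᵥ x)) - x ⬝ᵥ F *ᵥ x := by
        rw [heq' t htI, sub_mulVec, sub_mulVec, sub_mulVec, dotProduct_sub, dotProduct_sub,
          dotProduct_sub, hKNK, hKM, hMK]
        ring
      rw [hWexpU, hx, mul_one, hq']
      set m := x ⬝ᵥ (M t) *ᵥ x with hmdef
      set ν := x ⬝ᵥ N *ᵥ x with hνdef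
      set fq := x ⬝ᵥ F *ᵥ x with hfqdef
      have hν0 : 0 ≤ ν := hNq x
      have hm : m ≤ MB := le_of_abs_le (hqM t htI x hx)
      have hfq : fq ≤ FB := le_of_abs_le (hqF x hx)
      have hξ1t : 1 ≤ ξ t := hξ1 t htI
      have ham : a * m ≤ a * MB := mul_le_mul_of_nonneg_left hm ha0
      have hβne : β ≠ 0 := ne_of_gt hβ0
      have hψβ : β * ψ t = FB * (ξ t - 1) := by
        show β * (FB / β * (ξ t - 1)) = FB * (ξ t - 1)
        field_simp
      have haan : 0 ≤ a * (a * ν) := mul_nonneg ha0 (mul_nonneg ha0 hν0)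
      have hexp2 : a * MB = ψ t * MB + ε * (ξ t * MB) := by rw [hadef]; ring
      have hA : 2 * (ψ t * MB) = β * ψ t - ψ t := by rw [hβdef]; ring
      have hB : 2 * (ε * (ξ t * MB)) = β * (ε * ξ t) - ε * ξ t := by rw [hβdef]; ring
      have hεξ : 0 < ε * ξ t := mul_pos hε (hξpos t)
      have hψt0 := hψ0 t htI
      linarith [ham, hexp2, hA, hB, hψβ, hfq, haan, hεξ, hψt0]
  have hupper : ∀ t ∈ Icc (0:ℝ) T, ∀ x : Fin n → ℝ, x ⬝ᵥ x = 1 →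
      x ⬝ᵥ (K t) *ᵥ x ≤ ψ t := by
    intro t ht x hx
    by_contra hlt
    push_neg at hlt
    have hξt := hξpos t
    set ε : ℝ := (x ⬝ᵥ (K t) *ᵥ x - ψ t) / (2 * ξ t) with hεdef
    have hεpos : 0 < ε := div_pos (by linarith) (by positivity)
    have h1 := hupcore ε hεpos t ht x hx
    rw [hWexpU, hx, mul_one] at h1
    have hεξ2 : ε * ξ t = (x ⬝ᵥ (K t) *ᵥ x - ψ t) / 2 := by
      rw [hεdef]
      field_simp
    linarith
  -- lower barrier
  have hlowcore : ∀ ε : ℝ, 0 < ε → ε < (Z * (NB + 1))⁻¹ → ∀ t ∈ Icc (0:ℝ) T,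
      ∀ x : Fin n → ℝ, x ⬝ᵥ x = 1 →
      0 < x ⬝ᵥ (K t + (ε * ξ t) • (1 : Matrix (Fin n) (Fin n) ℝ)) *ᵥ x := by
    intro ε hε hεlt
    refine core (W := fun u => K u + (ε * ξ u) • (1 : Matrix (Fin n) (Fin n) ℝ))
      (W' := fun u => K' u + (ε * (-β * ξ u)) • (1 : Matrix (Fin n) (Fin n) ℝ))
      hT ?_ ?_ ?_ ?_
    · intro t ht i j
      exact (hKd t ht i j).add
        (((hξd t).const_mul ε).mul_const ((1 : Matrix (Fin n) (Fin n) ℝ) i j))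
    · intro t ht
      rw [transpose_add, transpose_smul, transpose_one, hsymK t ht]
    · intro x hx
      rw [hWexpL, hx, hKT]
      simp only [hξT, zero_mulVec, dotProduct_zero]
      nlinarith
    · intro t ht x hx hker
      have htI : t ∈ Icc (0:ℝ) T := Ico_subset_Icc_self ht
      set a : ℝ := -(ε * ξ t) with hadef
      have hεξ : 0 < ε * ξ t := mul_pos hε (hξpos t)
      have hKx : K t *ᵥ x = a • x := by
        have h1 : (K t + (ε * ξ t) • (1 : Matrix (Fin n) (Fin n) ℝ)) *ᵥ x
            = K t *ᵥ x + (ε * ξ t) • x := by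
          rw [add_mulVec, smul_mulVec, one_mulVec]
        rw [h1] at hker
        have h2 : K t *ᵥ x = -((ε * ξ t) • x) := by
          rw [eq_neg_iff_add_eq_zero]
          exact hker
        rw [h2, hadef, neg_smul]
      have hKsym := hsymK t htI
      have hKM : x ⬝ᵥ (K t * M t) *ᵥ x = a * (x ⬝ᵥ (M t) *ᵥ x) := by
        rw [← mulVec_mulVec, dot_KA hKsym hKx]
      have hMK : x ⬝ᵥ ((M t)ᵀ * K t) *ᵥ x = a * (x ⬝ᵥ (M t) *ᵥ x) := by
        rw [← mulVec_mulVec, hKx, mulVec_smul, dotProduct_smul, smul_eq_mul]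
        congr 1
        rw [dotProduct_mulVec, vecMul_transpose, dotProduct_comm]
      have hKNK : x ⬝ᵥ (K t * N * K t) *ᵥ x = a * (a * (x ⬝ᵥ N *ᵥ x)) := by
        rw [Matrix.mul_assoc, ← mulVec_mulVec, dot_KA hKsym hKx, ← mulVec_mulVec, hKx,
          mulVec_smul, dotProduct_smul, smul_eq_mul]
      have hq' : x ⬝ᵥ (K' t) *ᵥ x
          = a * (a * (x ⬝ᵥ N *ᵥ x)) - 2 * (a * (x ⬝ᵥ (M t) *ᵥ x)) - x ⬝ᵥ F *ᵥ x := by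
        rw [heq' t htI, sub_mulVec, sub_mulVec, sub_mulVec, dotProduct_sub, dotProduct_sub,
          dotProduct_sub, hKNK, hKM, hMK]
        ring
      rw [hWexpL, hx, mul_one, hq']
      set m := x ⬝ᵥ (M t) *ᵥ x with hmdef
      set ν := x ⬝ᵥ N *ᵥ x with hνdef
      set fq := x ⬝ᵥ F *ᵥ x with hfqdef
      have hν0 : 0 ≤ ν := hNq x
      have hνNB : ν ≤ NB := hqN x hx
      have hm : m ≤ MB := le_of_abs_le (hqM t htI x hx)
      have hfq0 : 0 ≤ fq := hFq x
      -- a = -(ε ξ t)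
      have hstep1 : ε * ξ t * NB < 1 := by
        have h5 : ε * ξ t ≤ ε * Z := mul_le_mul_of_nonneg_left (hξZ t htI) hε.le
        have h6 : ε * Z < (Z * (NB + 1))⁻¹ * Z := mul_lt_mul_of_pos_right hεlt hZpos
        have h7 : (Z * (NB + 1))⁻¹ * Z = (NB + 1)⁻¹ := by
          field_simp
        have h8 : ε * ξ t < (NB + 1)⁻¹ := by linarith
        have h9 : ε * ξ t * NB ≤ (NB + 1)⁻¹ * NB := mul_le_mul_of_nonneg_right h8.le hNB0
        have h10 : (NB + 1)⁻¹ * NB = NB / (NB + 1) := by ring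
        have h11 : NB / (NB + 1) < 1 := (div_lt_one (by positivity)).2 (by linarith)
        linarith
      have hstep2 : a * (a * ν) ≤ (ε * ξ t) * ((ε * ξ t) * NB) := by
        have h1 : a * (a * ν) = (ε * ξ t) * ((ε * ξ t) * ν) := by rw [hadef]; ring
        rw [h1]
        have := mul_le_mul_of_nonneg_left hνNB hεξ.le
        exact mul_le_mul_of_nonneg_left this hεξ.le
      have hstep3 : (ε * ξ t) * ((ε * ξ t) * NB) < (ε * ξ t) * 1 :=
        mul_lt_mul_of_pos_left hstep1 hεξ
      have hstep4 : -(2 * (a * m)) ≤ 2 * ((ε * ξ t) * MB) := by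
        have h1 : -(2 * (a * m)) = 2 * ((ε * ξ t) * m) := by rw [hadef]; ring
        rw [h1]
        have := mul_le_mul_of_nonneg_left hm hεξ.le
        linarith
      have hstep5 : β * (ε * ξ t) = 2 * ((ε * ξ t) * MB) + ε * ξ t := by
        rw [hβdef]; ring
      linarith
  have hlow : ∀ t ∈ Icc (0:ℝ) T, ∀ x : Fin n → ℝ, x ⬝ᵥ x = 1 →
      0 ≤ x ⬝ᵥ (K t) *ᵥ x := by
    intro t ht x hx
    by_contra hneg
    push_neg at hneg
    set q := x ⬝ᵥ (K t) *ᵥ x with hqdef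
    set ε : ℝ := min ((Z * (NB + 1))⁻¹ / 2) (-q / (2 * Z)) with hεdef
    have hεpos : 0 < ε := lt_min (by positivity) (div_pos (by linarith) (by positivity))
    have hεlt : ε < (Z * (NB + 1))⁻¹ :=
      lt_of_le_of_lt (min_le_left _ _) (half_lt_self (by positivity))
    have h1 := hlowcore ε hεpos hεlt t ht x hx
    rw [hWexpL, hx, mul_one] at h1
    have h2 : ε * ξ t ≤ ε * Z := mul_le_mul_of_nonneg_left (hξZ t ht) hεpos.le
    have h3 : ε ≤ -q / (2 * Z) := min_le_right _ _
    have h4 : ε * Z ≤ (-q / (2 * Z)) * Z := mul_le_mul_of_nonneg_right h3 hZpos.le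
    have h5 : (-q / (2 * Z)) * Z = -q / 2 := by field_simp
    linarith
  have part1 : ∀ t ∈ Icc (0:ℝ) T, ∀ x : Fin n → ℝ, 0 ≤ x ⬝ᵥ (K t) *ᵥ x :=
    fun t ht => quad_nonneg (hlow t ht)
  refine ⟨part1, ?_⟩
  -- identify the constant
  have hCeq : ((n:ℝ)^2 * |Fbound|) / (2*(n:ℝ)^2*|Mbound| + 1) *
      (Real.exp ((2*(n:ℝ)^2*|Mbound| + 1) * |T|) - 1) = ψ 0 := by
    rw [abs_of_nonneg hMb0, abs_of_nonneg hFb0, abs_of_nonneg hT]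
    simp only [hψdef, hξdef, hFBdef, hβdef, hMBdef, sub_zero]
    ring_nf
  have hC0 : 0 ≤ ψ 0 := hψ0 0 ⟨le_refl 0, hT⟩
  intro t ht i j
  show |K t i j| ≤ ((n:ℝ)^2 * |Fbound|) / (2*(n:ℝ)^2*|Mbound| + 1) *
      (Real.exp ((2*(n:ℝ)^2*|Mbound| + 1) * |T|) - 1)
  rw [hCeq]
  have hψtle : ψ t ≤ ψ 0 := hψmono t ht
  have hub : ∀ y : Fin n → ℝ, y ⬝ᵥ (K t) *ᵥ y ≤ ψ t * (y ⬝ᵥ y) :=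
    quad_scale (fun x hx => hupper t ht x hx)
  by_cases hij : i = j
  · subst hij
    have h1 : (0:ℝ) ≤ K t i i := by
      have := part1 t ht (Pi.single i 1)
      rwa [dot_single] at this
    have h2 : K t i i ≤ ψ t := by
      have h3 := hub (Pi.single i 1)
      rw [dot_single] at h3
      have h4 : Pi.single i (1:ℝ) ⬝ᵥ Pi.single i 1 = 1 := by
        simp [single_dotProduct, Pi.single_eq_same]
      rw [h4, mul_one] at h3
      exact h3
    rw [abs_le]
    constructor <;> linarith
  · set y₁ : Fin n → ℝ := Pi.single i 1 + Pi.single j 1 with hy₁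
    set y₂ : Fin n → ℝ := Pi.single i 1 - Pi.single j 1 with hy₂
    have hq1 : y₁ ⬝ᵥ (K t) *ᵥ y₁ = K t i i + K t i j + (K t j i + K t j j) := by
      simp only [hy₁, mulVec_add, dotProduct_add, add_dotProduct, dot_single]
      ring
    have hq2 : y₂ ⬝ᵥ (K t) *ᵥ y₂ = K t i i - K t i j - (K t j i - K t j j) := by
      simp only [hy₂, mulVec_sub, dotProduct_sub, sub_dotProduct, dot_single]
      ring
    have hy1y1 : y₁ ⬝ᵥ y₁ = 2 := by
      simp only [hy₁, add_dotProduct, dotProduct_add, single_dotProduct, one_mul]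
      rw [Pi.single_eq_same, Pi.single_eq_same, Pi.single_eq_of_ne hij,
        Pi.single_eq_of_ne (Ne.symm hij)]
      norm_num
    have hy2y2 : y₂ ⬝ᵥ y₂ = 2 := by
      simp only [hy₂, sub_dotProduct, dotProduct_sub, single_dotProduct, one_mul]
      rw [Pi.single_eq_same, Pi.single_eq_same, Pi.single_eq_of_ne hij,
        Pi.single_eq_of_ne (Ne.symm hij)]
      norm_num
    have h01 := part1 t ht y₁
    have h02 := part1 t ht y₂
    have hub1 : y₁ ⬝ᵥ (K t) *ᵥ y₁ ≤ ψ t * 2 := by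
      have := hub y₁; rwa [hy1y1] at this
    have hub2 : y₂ ⬝ᵥ (K t) *ᵥ y₂ ≤ ψ t * 2 := by
      have := hub y₂; rwa [hy2y2] at this
    have hsymji := hji t ht i j
    rw [hq1] at h01 hub1
    rw [hq2] at h02 hub2
    rw [abs_le]
    constructor <;> nlinarith [hsymji]
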